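/- The binary Fibonacci sequence (the iterative fixed point of a → ab, b → a) is not ultimately periodic. -/

import Mathlib

/-- Extension of a substitution `φ : A → B*` to finite words. -/
def wordMap {A B : Type} (φ : A → List B) (w : List A) : List B := w.flatMap φ

/-- `n`-fold iteration of a morphism applied to a word. -/
def iterWord {A : Type} (φ : A → List A) (n : ℕ) (w : List A) : List A :=
  (wordMap φ)^[n] w

/-- A morphism is `k`-uniform if every letter has image of length `k`. -/
def Uniform {A : Type} (k : ℕ) (φ : A → List A) : Prop := ∀ a, (φ a).length = k

/-- The finite word `w` is a prefix of the infinite sequence `s`. -/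
def PrefixSeq {A : Type} (w : List A) (s : ℕ → A) : Prop :=
  ∀ i, i < w.length → w[i]? = some (s i)

/-- `φ` is prolongable on `a₀`: `φ(a₀) = a₀ x` with `x` nonempty and iterates of `x` never empty. -/
def Prolongable {A : Type} (φ : A → List A) (a₀ : A) : Prop :=
  ∃ x : List A, x ≠ [] ∧ φ a₀ = a₀ :: x ∧ ∀ ℓ, iterWord φ ℓ x ≠ []

/-- `s` is the iterative fixed point of `φ` beginning with `a₀`:
`φ` is prolongable on `a₀` and every iterate `φ^n(a₀)` is a prefix of `s`
(their lengths tend to infinity thanks to prolongability, so `s` is determined). -/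
def IsIterFix {A : Type} (φ : A → List A) (a₀ : A) (s : ℕ → A) : Prop :=
  Prolongable φ a₀ ∧ ∀ n, PrefixSeq (iterWord φ n [a₀]) s

/-- `s` is ultimately periodic. -/
def UltimatelyPeriodic {A : Type} (s : ℕ → A) : Prop :=
  ∃ N p : ℕ, 1 ≤ p ∧ ∀ n, N ≤ n → s (n + p) = s n

/-- The extension of `φ` to infinite sequences fixes `s`: for every `m`,
the image of the length-`m` prefix of `s` is again a prefix of `s`. -/
def SeqFixedPoint {A : Type} (φ : A → List A) (s : ℕ → A) : Prop :=
  ∀ m, PrefixSeq (wordMap φ ((List.range m).map s)) s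

/-- The Fibonacci morphism: `a ↦ ab`, `b ↦ a` (with `a := false`, `b := true`). -/
def tau : Bool → List Bool
  | false => [false, true]
  | true => [false]

/-! If `s` is ultimately periodic with period `p`, the number `f m` of letters `a` among the
first `m` letters satisfies `f (m + p) = f m + c` for large `m`, so the frequency `f m / m`
tends to the rational `c / p`. But the prefix of length `F (n + 2)` is `τⁿ(a)`, which contains
`F (n + 1)` letters `a`, and `F (n + 1) / F (n + 2)` tends to the irrational `1 / φ = -ψ`. -/

open Filter Topology Real

theorem exists_abs_le_of_periodic_from {g : ℕ → ℝ} {N p : ℕ} (hp : 0 < p)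
    (hg : ∀ m, N ≤ m → g (m + p) = g m) : ∃ M, ∀ m, N ≤ m → |g m| ≤ M := by
  have hper : Function.Periodic (fun k => g (N + k)) p := fun k => by
    simpa only [add_assoc] using hg (N + k) (by omega)
  refine ⟨∑ j ∈ Finset.range p, |g (N + j)|, fun m hm => ?_⟩
  obtain ⟨k, rfl⟩ := Nat.exists_eq_add_of_le hm
  rw [← hper.map_mod_nat k]
  exact Finset.single_le_sum (f := fun j => |g (N + j)|) (fun _ _ => abs_nonneg _)
    (Finset.mem_range.mpr (Nat.mod_lt k hp))

theorem tendsto_div_of_add_period_eq {f : ℕ → ℝ} {N p : ℕ} {c : ℝ} (hp : 0 < p)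
    (hf : ∀ m, N ≤ m → f (m + p) = f m + c) :
    Tendsto (fun m => f m / m) atTop (𝓝 (c / p)) := by
  have hp' : (p : ℝ) ≠ 0 := by positivity
  obtain ⟨M, hM⟩ := exists_abs_le_of_periodic_from (g := fun m => f m - c / p * m) hp
    fun m hm => by simp only [hf m hm]; push_cast; field_simp; ring
  have herr : Tendsto (fun m : ℕ => (f m - c / p * m) / m) atTop (𝓝 0) := by
    refine squeeze_zero_norm' ?_ (tendsto_const_div_atTop_nhds_zero_nat M)
    filter_upwards [eventually_ge_atTop N] with m hm
    rw [Real.norm_eq_abs, abs_div, Nat.abs_cast]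
    exact div_le_div_of_nonneg_right (hM m hm) (Nat.cast_nonneg m)
  have := herr.add_const (c / p)
  rw [zero_add] at this
  refine this.congr' ?_
  filter_upwards [eventually_gt_atTop 0] with m hm
  field_simp
  ring

theorem PrefixSeq.eq_map_range {A : Type} {w : List A} {s : ℕ → A} (h : PrefixSeq w s) :
    w = (List.range w.length).map s :=
  List.ext_getElem (by simp) fun i hi _ => by simpa [List.getElem?_eq_getElem hi] using h i hi

section Frequency

variable {A : Type} [DecidableEq A]

def prefixCount (s : ℕ → A) (a : A) (m : ℕ) : ℕ :=
  ((List.range m).map s).count a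

theorem prefixCount_succ (s : ℕ → A) (a : A) (m : ℕ) :
    prefixCount s a (m + 1) = prefixCount s a m + if s m = a then 1 else 0 := by
  by_cases h : s m = a <;> simp [prefixCount, List.range_succ, h]

theorem PrefixSeq.prefixCount_length {w : List A} {s : ℕ → A}
    (h : PrefixSeq w s) (a : A) : prefixCount s a w.length = w.count a := by
  rw [prefixCount, ← h.eq_map_range]

theorem UltimatelyPeriodic.exists_tendsto_prefixCount_div {s : ℕ → A}
    (h : UltimatelyPeriodic s) (a : A) :
    ∃ q : ℚ, Tendsto (fun m => (prefixCount s a m : ℝ) / m) atTop (𝓝 q) := by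
  obtain ⟨N, p, hp, hper⟩ := h
  set c : ℚ := prefixCount s a (N + p) - prefixCount s a N
  have hinc : ∀ m, N ≤ m → (prefixCount s a (m + p) : ℝ) = prefixCount s a m + c := by
    intro m hm
    induction m, hm using Nat.le_induction with
    | base => push_cast [c]; ring
    | succ m hm ih =>
      rw [Nat.add_right_comm, prefixCount_succ, prefixCount_succ, hper m hm]
      push_cast
      linarith
  exact ⟨c / p, by push_cast; exact tendsto_div_of_add_period_eq hp hinc⟩

end Frequency

theorem iterWord_succ {A : Type} (φ : A → List A) (n : ℕ) (w : List A) :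
    iterWord φ (n + 1) w = wordMap φ (iterWord φ n w) :=
  Function.iterate_succ_apply' _ _ _

theorem count_false_wordMap_tau (w : List Bool) : (wordMap tau w).count false = w.length := by
  induction w with
  | nil => rfl
  | cons b w ih => cases b <;> simp_all [wordMap, tau]

theorem length_wordMap_tau (w : List Bool) :
    (wordMap tau w).length = w.length + w.count false := by
  induction w with
  | nil => rfl
  | cons b w ih => cases b <;> simp_all [wordMap, tau] <;> omega

theorem length_count_iterWord_tau (n : ℕ) :
    (iterWord tau n [false]).length = Nat.fib (n + 2) ∧
      (iterWord tau n [false]).count false = Nat.fib (n + 1) := by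
  induction n with
  | zero => exact ⟨rfl, rfl⟩
  | succ n ih =>
    rw [iterWord_succ, length_wordMap_tau, count_false_wordMap_tau, ih.1, ih.2,
      Nat.fib_add_two (n := n + 1)]
    exact ⟨add_comm _ _, rfl⟩

theorem IsIterFix.prefixCount_fib {s : ℕ → Bool} (hs : IsIterFix tau false s) (n : ℕ) :
    prefixCount s false (Nat.fib (n + 2)) = Nat.fib (n + 1) := by
  obtain ⟨hlen, hcount⟩ := length_count_iterWord_tau n
  rw [← hlen, (hs.2 n).prefixCount_length, hcount]

theorem stmt18 (s : ℕ → Bool) (hs : IsIterFix tau false s) :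
    ¬ UltimatelyPeriodic s := by
  intro hper
  obtain ⟨q, hq⟩ := hper.exists_tendsto_prefixCount_div false
  have hfib : Tendsto (fun n => (Nat.fib (n + 1) : ℝ) / Nat.fib (n + 2)) atTop (𝓝 q) := by
    simpa only [Function.comp_def, hs.prefixCount_fib] using
      hq.comp Nat.fib_add_two_strictMono.tendsto_atTop
  have hψ : -goldenConj = q :=
    tendsto_nhds_unique (tendsto_fib_div_fib_succ_atTop.comp (tendsto_add_atTop_nat 1)) hfib
  exact goldenConj_irrational ⟨-q, by push_cast; linarith⟩
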